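/- Suppose some λ_k with k ≥ 1 is nonzero, and let k ≥ 1 be the smallest integer with λ_k ≠ 0. Then in R^{t,x^{2p^s}−λ}_Θ one has the equality of (two-sided) ideals ⟨(x² − λ̃_{0,0})^{p^s}⟩ = ⟨u^k⟩. -/

import Mathlib

open Polynomial

namespace SkewPaper

variable (p m t : ℕ) [Fact p.Prime]

/-- The finite field `F_{p^m}`. -/
abbrev Fq : Type := GaloisField p m

/-- The finite chain ring `R^t = F_{p^m}[u]/⟨u^t⟩`. -/
abbrev Rt : Type :=
  Polynomial (Fq p m) ⧸ Ideal.span {(Polynomial.X : Polynomial (Fq p m)) ^ t}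

/-- The element `u` of `R^t`. -/
noncomputable def uE : Rt p m t := Ideal.Quotient.mk _ Polynomial.X

/-- The canonical embedding `F_{p^m} → R^t`. -/
noncomputable def eps : Fq p m →+* Rt p m t :=
  (Ideal.Quotient.mk _).comp Polynomial.C

/-- The automorphism `Θ` of `R^t` extending `θ` with `Θ(u) = u`,
i.e. `Θ(a₀ + a₁u + ⋯ + a_{t-1}u^{t-1}) = θ(a₀) + θ(a₁)u + ⋯ + θ(a_{t-1})u^{t-1}`. -/
noncomputable def Th (theta : Fq p m ≃+* Fq p m) : Rt p m t ≃+* Rt p m t :=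
  Ideal.quotientEquiv _ _ (Polynomial.mapEquiv theta) (by
    rw [Ideal.map_span, Set.image_singleton]
    simp [Polynomial.mapEquiv_apply])

/-- Reduction of `R^t` modulo `u`. -/
noncomputable def rdc (ht : 0 < t) : Rt p m t →+* Fq p m :=
  Ideal.Quotient.lift _ (Polynomial.evalRingHom 0) (by
    intro a ha
    rw [Ideal.mem_span_singleton] at ha
    obtain ⟨b, rfl⟩ := ha
    simp [zero_pow ht.ne'])

/-- `a` right-divides `b`, i.e. `b = h * a` for some `h`. -/
def RDvd {A : Type*} [Mul A] (a b : A) : Prop := ∃ h, b = h * a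

/-- The element `Σᵢ ι(cᵢ) X^i` determined by a coefficient family `c`. -/
noncomputable def spoly {R A : Type*} [Semiring R] [Semiring A] (iot : R →+* A) (X : A)
    (c : ℕ →₀ R) : A :=
  c.sum fun i a => iot a * X ^ i

/-- Lift `Σᵢ ι(ε(cᵢ)) X^i` of a skew polynomial over `F_{p^m}` to the skew polynomial ring
over `R^t` (coefficient-wise, via the embedding `F_{p^m} → R^t`). -/
noncomputable def liftP {A : Type*} [Semiring A] (iot : Rt p m t →+* A) (X : A)
    (c : ℕ →₀ Fq p m) : A :=
  c.sum fun i a => iot (eps p m t a) * X ^ i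

/-- `λ = λ₀ + uλ₁ + ⋯ + u^{t-1}λ_{t-1}` as an element of `R^t`. -/
noncomputable def lamOf (lc : ℕ → Fq p m) : Rt p m t :=
  ∑ i ∈ Finset.range t, eps p m t (lc i) * uE p m t ^ i

/-- The order `|Θ|` of `Θ` in the automorphism group of `R^t`. -/
noncomputable def thOrder (theta : Fq p m ≃+* Fq p m) : ℕ :=
  orderOf (G := RingAut (Rt p m t)) (Th p m t theta)

/-- The order `|θ|` of `θ` in the automorphism group of `F_{p^m}`. -/
noncomputable def thetaOrder (theta : Fq p m ≃+* Fq p m) : ℕ :=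
  orderOf (G := RingAut (Fq p m)) theta

/-- The central polynomial `f(x) = Σᵢ fᵢ x^{i·|Θ|}` in the skew polynomial ring. -/
noncomputable def fOf {A : Type*} [Ring A] (theta : Fq p m ≃+* Fq p m)
    (iot : Rt p m t →+* A) (X : A) (fc : ℕ →₀ Rt p m t) : A :=
  fc.sum fun i a => iot a * X ^ (i * thOrder p m t theta)

/-- The image of `u` in the quotient `R^{t,f}_Θ`. -/
noncomputable def uQ {P Q : Type*} [Semiring P] [Semiring Q] (iot : Rt p m t →+* P)
    (piQ : P →+* Q) : Q :=
  piQ (iot (uE p m t))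

/-- The image in `R^{t,f}_Θ` of the lift of a skew polynomial over `F_{p^m}`. -/
noncomputable def lQ {P Q : Type*} [Semiring P] [Semiring Q] (iot : Rt p m t →+* P) (X : P)
    (piQ : P →+* Q) (c : ℕ →₀ Fq p m) : Q :=
  piQ (liftP p m t iot X c)

/-- The class in `F_{p^m}[x,θ]/⟨f̄⟩` of the skew polynomial with coefficients `c`. -/
noncomputable def lQf {Pf Qf : Type*} [Semiring Pf] [Semiring Qf] (iotf : Fq p m →+* Pf)
    (Xf : Pf) (pif : Pf →+* Qf) (c : ℕ →₀ Fq p m) : Qf :=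
  pif (spoly iotf Xf c)

/-- `b(x)` right-divides `c(x)` in the quotient `F_{p^m}[x,θ]/⟨f̄⟩`. -/
def RDvdC {Pf Qf : Type*} [Semiring Pf] [Semiring Qf] (iotf : Fq p m →+* Pf) (Xf : Pf)
    (pif : Pf →+* Qf) (b c : ℕ →₀ Fq p m) : Prop :=
  ∃ h : Qf, lQf p m iotf Xf pif c = h * lQf p m iotf Xf pif b

/-- Membership in `B_w`: representative of degree `≤ D - 1` which right-divides `w`. -/
def InB {Pf : Type*} [Semiring Pf] (iotf : Fq p m →+* Pf) (Xf : Pf) (w : Pf) (D : ℕ)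
    (c : ℕ →₀ Fq p m) : Prop :=
  (∀ i, D ≤ i → c i = 0) ∧ RDvd (spoly iotf Xf c) w

/-- `deg c < deg d` for coefficient families. -/
def degLt {R : Type*} [Zero R] (c d : ℕ →₀ R) : Prop := c.support.max < d.support.max

/-- "Type (ii)" left ideals of `R^{t,f}_Θ`: those of the form
`Σⱼ R (u^{(t-1)-i_j} b_{i_j}(x) - u^{(t-1)-(i_j-1)} g_{i_j}(x))` with
`0 ≤ i₁ < ⋯ < i_n ≤ t-2`, `b_{i_j} ∈ B_w` of degree `≤ D - 1`, together with the
right-divisibility side condition. -/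
def TypeTwo (p m t : ℕ) [Fact p.Prime] {P Pf Q Qf : Type*} [Ring P] [Ring Pf] [Ring Q] [Ring Qf]
    (iot : Rt p m t →+* P) (Xp : P) (piQ : P →+* Q)
    (iotf : Fq p m →+* Pf) (Xf : Pf) (pif : Pf →+* Qf)
    (w : Pf) (D : ℕ) (J : Ideal Q) : Prop :=
  ∃ (n : ℕ) (idx : Fin n → ℕ) (bcs : Fin n → (ℕ →₀ Fq p m)) (gs : Fin n → Q),
    StrictMono idx ∧ (∀ j, idx j ≤ t - 2) ∧ (∀ j, InB p m iotf Xf w D (bcs j)) ∧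
    J = Submodule.span Q (Set.range fun j : Fin n =>
        uQ p m t iot piQ ^ (t - 1 - idx j) * lQ p m t iot Xp piQ (bcs j)
          - uQ p m t iot piQ ^ (t - idx j) * gs j) ∧
    ∀ (j k : Fin n), j < k → ∀ (cc : ℕ →₀ Fq p m) (g : Q),
      uQ p m t iot piQ ^ (t - 1 - idx j) * lQ p m t iot Xp piQ cc
          + uQ p m t iot piQ ^ (t - idx j) * g ∈
        Submodule.span Q ((fun l : Fin n =>
          uQ p m t iot piQ ^ (t - 1 - idx l) * lQ p m t iot Xp piQ (bcs l)
            - uQ p m t iot piQ ^ (t - idx l) * gs l) '' {l | k ≤ l}) →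
      RDvdC p m iotf Xf pif (bcs j) cc

end SkewPaper

/- Write `λ = λ₀ + u^k v`; `v` is a unit since its constant term is `λ_k ≠ 0` and `u` is nilpotent.
Since `θ` fixes `λ₀`, the element `λ̃₀₀ = λ₀^{p^{m-r}}` commutes with `x`, so in characteristic
`p` the binomial theorem collapses to `(x² - λ̃₀₀)^{p^s} = x^{2p^s} - λ̃₀₀^{p^s} = x^{2p^s} - λ₀`,
which equals `λ - λ₀ = u^k v` in the quotient. -/

theorem sum_range_mul_pow_eq_add_pow_mul {R : Type*} [CommSemiring R] (a : ℕ → R) (x : R)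
    {k n : ℕ} (hk : 1 ≤ k) (hkn : k ≤ n) (ha : ∀ j, 1 ≤ j → j < k → a j = 0) :
    ∑ i ∈ Finset.range n, a i * x ^ i =
      a 0 + x ^ k * ∑ i ∈ Finset.range (n - k), a (k + i) * x ^ i := by
  rw [← Finset.sum_range_add_sum_Ico _ hkn, Finset.sum_Ico_eq_sum_range, Finset.mul_sum]
  congr 1
  · rw [Finset.sum_eq_single_of_mem 0 (Finset.mem_range.mpr hk), pow_zero, mul_one]
    intro j hj hj0
    rw [ha j (Nat.one_le_iff_ne_zero.mpr hj0) (Finset.mem_range.mp hj), zero_mul]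
  · refine Finset.sum_congr rfl fun i _ => ?_
    ring

theorem isUnit_sum_range_mul_pow {R : Type*} [CommRing R] (a : ℕ → R) {x : R}
    (hx : IsNilpotent x) {n : ℕ} (hn : 0 < n) (ha : IsUnit (a 0)) :
    IsUnit (∑ i ∈ Finset.range n, a i * x ^ i) := by
  rw [sum_range_mul_pow_eq_add_pow_mul a x le_rfl hn fun j hj hj1 => by omega]
  exact ((Commute.all _ _).isNilpotent_mul_right (hx.pow_succ 0)).isUnit_add_left_of_commute ha
    (Commute.all _ _)

theorem GaloisField.pow_pow_sub_mod_pow_pow (p m s : ℕ) [Fact p.Prime] (hm : m ≠ 0)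
    (a : GaloisField p m) : (a ^ p ^ (m - s % m)) ^ p ^ s = a := by
  have : Fintype (GaloisField p m) := Fintype.ofFinite _
  have hcard : Fintype.card (GaloisField p m) = p ^ m := by
    rw [← Nat.card_eq_fintype_card, GaloisField.card p m hm]
  have hexp : m - s % m + s = m * (s / m + 1) := by
    have := Nat.mod_lt s (Nat.pos_of_ne_zero hm)
    have := Nat.div_add_mod s m
    rw [Nat.mul_add, mul_one]
    generalize m * (s / m) = z at *
    omega
  rw [← pow_mul, ← pow_add, hexp, pow_mul, ← hcard, FiniteField.pow_card_pow]

namespace SkewPaper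

section ChainRing

variable (p m t : ℕ) [Fact p.Prime]

theorem isNilpotent_uE : IsNilpotent (uE p m t) := by
  refine ⟨t, ?_⟩
  rw [uE, ← map_pow, Ideal.Quotient.eq_zero_iff_mem]
  exact Ideal.mem_span_singleton_self _

theorem Th_mk (theta : Fq p m ≃+* Fq p m) (f : (Fq p m)[X]) :
    Th p m t theta (Ideal.Quotient.mk _ f) = Ideal.Quotient.mk _ (f.map theta) := by
  rw [Th, Ideal.quotientEquiv_mk]
  rfl

theorem Th_eps (theta : Fq p m ≃+* Fq p m) (a : Fq p m) :
    Th p m t theta (eps p m t a) = eps p m t (theta a) := by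
  rw [eps, RingHom.comp_apply, Th_mk, Polynomial.map_C]
  rfl

theorem Th_uE (theta : Fq p m ≃+* Fq p m) : Th p m t theta (uE p m t) = uE p m t := by
  rw [uE, Th_mk, Polynomial.map_X]

theorem Th_lamOf (theta : Fq p m ≃+* Fq p m) (lc : ℕ → Fq p m) :
    Th p m t theta (lamOf p m t lc) = lamOf p m t (fun i => theta (lc i)) := by
  simp only [lamOf, map_sum, map_mul, map_pow, Th_eps, Th_uE]

theorem rdc_lamOf (ht : 0 < t) (lc : ℕ → Fq p m) : rdc p m t ht (lamOf p m t lc) = lc 0 := by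
  rw [lamOf, map_sum, Finset.sum_eq_single_of_mem 0 (Finset.mem_range.mpr ht)]
  · simp [eps, uE, rdc]
  · intro i _ hi
    simp [eps, uE, rdc, zero_pow hi]

theorem apply_lamOf_zero_of_Th_lamOf (ht : 0 < t) {theta : Fq p m ≃+* Fq p m}
    {lc : ℕ → Fq p m} (h : Th p m t theta (lamOf p m t lc) = lamOf p m t lc) :
    theta (lc 0) = lc 0 := by
  simpa only [Th_lamOf, rdc_lamOf] using congrArg (rdc p m t ht) h

end ChainRing

theorem statement10_general (p m t s : ℕ) [Fact p.Prime] (hm : 0 < m) (ht : 0 < t)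
    (theta : Fq p m ≃+* Fq p m)
    (lc : ℕ → Fq p m)
    (hTlam : Th p m t theta (lamOf p m t lc) = lamOf p m t lc)
    {P : Type*} [Ring P] (iot : Rt p m t →+* P) (Xp : P)
    (hXiot : ∀ r, Xp * iot r = iot (Th p m t theta r) * Xp)
    {Q : Type*} [Ring Q] (piQ : P →+* Q)
    (hkerQ : RingHom.ker piQ = Ideal.span {Xp ^ (2 * p ^ s) - iot (lamOf p m t lc)})
    (k : ℕ) (hk1 : 1 ≤ k) (hkt : k < t) (hk : lc k ≠ 0)
    (hkmin : ∀ j, 1 ≤ j → j < k → lc j = 0) :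
    Ideal.span {piQ ((Xp ^ 2 - iot (eps p m t (lc 0 ^ p ^ (m - s % m)))) ^ p ^ s)} =
      Ideal.span {uQ p m t iot piQ ^ k} := by
  rcases subsingleton_or_nontrivial Q with hQ | hQ
  · exact congrArg _ (congrArg _ (Subsingleton.elim _ _))
  set c := eps p m t (lc 0 ^ p ^ (m - s % m))
  set v := ∑ i ∈ Finset.range (t - k), eps p m t (lc (k + i)) * uE p m t ^ i
  have : CharP Q p := charP_of_injective_ringHom (((piQ.comp iot).comp (eps p m t)).injective) p
  have hx : piQ Xp ^ (2 * p ^ s) = piQ (iot (lamOf p m t lc)) := by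
    rw [← map_pow, ← sub_eq_zero, ← map_sub, ← RingHom.mem_ker, hkerQ]
    exact Ideal.mem_span_singleton_self _
  have hcomm : Commute Xp (iot c) := by
    rw [Commute, SemiconjBy, hXiot, Th_eps, map_pow, apply_lamOf_zero_of_Th_lamOf p m t ht hTlam]
  have hc : c ^ p ^ s = eps p m t (lc 0) := by
    rw [← map_pow, GaloisField.pow_pow_sub_mod_pow_pow p m s hm.ne']
  have hlam : lamOf p m t lc = eps p m t (lc 0) + uE p m t ^ k * v :=
    sum_range_mul_pow_eq_add_pow_mul _ _ hk1 hkt.le fun j hj1 hjk => by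
      rw [hkmin j hj1 hjk, map_zero]
  have hv : IsUnit v :=
    isUnit_sum_range_mul_pow _ (isNilpotent_uE p m t) (by omega)
      ((isUnit_iff_ne_zero.mpr (by simpa using hk)).map (eps p m t))
  have key : piQ ((Xp ^ 2 - iot c) ^ p ^ s) = piQ (iot v) * uQ p m t iot piQ ^ k :=
    calc piQ ((Xp ^ 2 - iot c) ^ p ^ s)
        _ = (piQ Xp ^ 2 - piQ (iot c)) ^ p ^ s := by simp only [map_pow, map_sub]
        _ = piQ Xp ^ (2 * p ^ s) - piQ (iot (c ^ p ^ s)) := by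
          rw [sub_pow_char_pow_of_commute _ _ ((hcomm.map piQ).pow_left 2), ← pow_mul,
            map_pow iot, map_pow piQ]
        _ = piQ (iot (lamOf p m t lc - eps p m t (lc 0))) := by rw [hx, hc, map_sub, map_sub]
        _ = piQ (iot v) * uQ p m t iot piQ ^ k := by
          rw [hlam, add_sub_cancel_left, mul_comm, map_mul, map_mul, uQ, map_pow, map_pow]
  rw [key, Ideal.span_singleton_mul_left_unit ((hv.map iot).map piQ)]

/-- If `k ≥ 1` is the smallest index with `λ_k ≠ 0`, then in
`R^{t,x^{2p^s}-λ}_Θ` one has `⟨(x² - λ̃₀₀)^{p^s}⟩ = ⟨u^k⟩`. -/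
theorem statement10 (p m t s : ℕ) [Fact p.Prime] (hp2 : p ≠ 2) (hm : 0 < m) (ht : 0 < t)
    (hs : 0 < s) (theta : Fq p m ≃+* Fq p m)
    (lc : ℕ → Fq p m) (hl0 : lc 0 ≠ 0)
    (hTlam : Th p m t theta (lamOf p m t lc) = lamOf p m t lc)
    (hord : thOrder p m t theta ∣ 2 * p ^ s)
    {P : Type*} [Ring P] (iot : Rt p m t →+* P) (Xp : P)
    (hXiot : ∀ r, Xp * iot r = iot (Th p m t theta r) * Xp)
    (hPrep : ∀ g : P, ∃! c : ℕ →₀ Rt p m t, g = spoly iot Xp c)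
    {Q : Type*} [Ring Q] (piQ : P →+* Q) (hpiQ : Function.Surjective piQ)
    (hkerQ : RingHom.ker piQ = Ideal.span {Xp ^ (2 * p ^ s) - iot (lamOf p m t lc)})
    (k : ℕ) (hk1 : 1 ≤ k) (hkt : k < t) (hk : lc k ≠ 0)
    (hkmin : ∀ j, 1 ≤ j → j < k → lc j = 0) :
    Ideal.span {piQ ((Xp ^ 2 - iot (eps p m t (lc 0 ^ p ^ (m - s % m)))) ^ p ^ s)} =
      Ideal.span {uQ p m t iot piQ ^ k} :=
  statement10_general p m t s hm ht theta lc hTlam iot Xp hXiot piQ hkerQ k hk1 hkt hk hkmin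

end SkewPaper
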